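/- Pairwise exchangeability for the response: if y = Xβ + z with z ~ N(0, σ²Iₙ), then for any subset S ⊆ {1,…,p} consisting only of null features (β_j = 0 for all j ∈ S), the random vector ([X X̃]_swap(S))ᵀ y has the same distribution as [X X̃]ᵀ y. -/

import Mathlib

open Matrix MeasureTheory ProbabilityTheory

/-- The augmented design `[X X̃]`: the `n × 2p` columnwise concatenation of `X` and `X̃`. -/
def knockoffAug {n p : ℕ} (X Xt : Matrix (Fin n) (Fin p) ℝ) :
    Matrix (Fin n) (Fin p ⊕ Fin p) ℝ :=
  Matrix.fromCols X Xt

/-- `[X X̃]_swap(S)`: the augmented design with columns `X_j` and `X̃_j` exchanged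
for each `j ∈ S`. -/
def knockoffSwap {n p : ℕ} (X Xt : Matrix (Fin n) (Fin p) ℝ) (S : Finset (Fin p)) :
    Matrix (Fin n) (Fin p ⊕ Fin p) ℝ :=
  Matrix.fromCols
    (Matrix.of fun i j => if j ∈ S then Xt i j else X i j)
    (Matrix.of fun i j => if j ∈ S then X i j else Xt i j)

open WithLp Complex
open scoped RealInnerProductSpace NNReal

/-!
Write `A = [X X̃]`. Its swapped version is `A` with the columns permuted by the involution
exchanging `X_j` and `X̃_j` for `j ∈ S`, so its Gram matrix is `AᵀA = [[Σ, Σ - D], [Σ - D, Σ]]`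
(`D = diag{s}`) with rows and columns permuted alike; as `D` is diagonal and the permutation never
changes the feature index, this is `AᵀA` again. The means agree too: the coordinates of
`Aᵀ X β = [Σβ, (Σ - D)β]` belonging to a null feature `j` differ by `s_j β_j = 0`. Finally, for
`z ~ N(0, σ² I)` the characteristic function of `M z` is `t ↦ exp(-σ² tᵀ M Mᵀ t / 2)`, so the law
of `c + M z` depends on `M` only through `M Mᵀ`.
-/

section swapOn

variable {ι : Type*} [DecidableEq ι] (S : Finset ι)

def swapOn : ι ⊕ ι → ι ⊕ ι :=
  Sum.elim (fun j => if j ∈ S then .inr j else .inl j)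
    (fun j => if j ∈ S then .inl j else .inr j)

variable {S}

lemma apply_swapOn {α : Type*} {w : ι ⊕ ι → α} (hw : ∀ j ∈ S, w (.inl j) = w (.inr j))
    (u : ι ⊕ ι) : w (swapOn S u) = w u := by
  rcases u with j | j <;> by_cases hj : j ∈ S <;> simp [swapOn, hj, hw]

lemma fromBlocks_sub_diagonal_submatrix_swapOn {R : Type*} [AddGroup R] (A : Matrix ι ι R)
    (d : ι → R) :
    (fromBlocks A (A - diagonal d) (A - diagonal d) A).submatrix (swapOn S) (swapOn S)
      = fromBlocks A (A - diagonal d) (A - diagonal d) A := by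
  have hdiag : ∀ a b, a ∈ S → b ∉ S → diagonal d a b = 0 ∧ diagonal d b a = 0 :=
    fun a b ha hb => ⟨diagonal_apply_ne _ (ne_of_mem_of_not_mem ha hb),
      diagonal_apply_ne' _ (ne_of_mem_of_not_mem ha hb)⟩
  ext (a | a) (b | b) <;> by_cases ha : a ∈ S <;> by_cases hb : b ∈ S <;>
    simp [swapOn, ha, hb, hdiag]

end swapOn

lemma transpose_mul_eq_sub_diagonal_of_mul_eq {m n R : Type*} [Fintype m] [DecidableEq n]
    [CommRing R] {A B : Matrix m n R} {d : n → R} (h : Aᵀ * B = Aᵀ * A - diagonal d) :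
    Bᵀ * A = Aᵀ * A - diagonal d := by
  rw [← transpose_transpose (Bᵀ * A), transpose_mul, transpose_transpose, h, transpose_sub,
    transpose_mul, transpose_transpose, diagonal_transpose]

section knockoff

variable {n p : ℕ} {X Xt : Matrix (Fin n) (Fin p) ℝ} {s : Fin p → ℝ} {S : Finset (Fin p)}

lemma knockoffSwap_eq_submatrix :
    knockoffSwap X Xt S = (knockoffAug X Xt).submatrix id (swapOn S) := by
  ext i (j | j) <;> by_cases hj : j ∈ S <;> simp [knockoffSwap, knockoffAug, swapOn, hj]

lemma knockoffAug_gram (h1 : Xtᵀ * Xt = Xᵀ * X) (h2 : Xᵀ * Xt = Xᵀ * X - diagonal s) :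
    (knockoffAug X Xt)ᵀ * knockoffAug X Xt
      = fromBlocks (Xᵀ * X) (Xᵀ * X - diagonal s) (Xᵀ * X - diagonal s) (Xᵀ * X) := by
  rw [knockoffAug, transpose_fromCols, fromRows_mul_fromCols, h1, h2,
    transpose_mul_eq_sub_diagonal_of_mul_eq h2]

lemma knockoffSwap_gram (h1 : Xtᵀ * Xt = Xᵀ * X) (h2 : Xᵀ * Xt = Xᵀ * X - diagonal s) :
    (knockoffSwap X Xt S)ᵀ * knockoffSwap X Xt S = (knockoffAug X Xt)ᵀ * knockoffAug X Xt := by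
  rw [knockoffSwap_eq_submatrix, transpose_submatrix,
    ← submatrix_mul _ _ _ id _ Function.bijective_id, knockoffAug_gram h1 h2,
    fromBlocks_sub_diagonal_submatrix_swapOn]

lemma knockoffSwap_transpose_mulVec_of_null (h2 : Xᵀ * Xt = Xᵀ * X - diagonal s)
    {β : Fin p → ℝ} (hS : ∀ j ∈ S, β j = 0) :
    (knockoffSwap X Xt S)ᵀ *ᵥ (X *ᵥ β) = (knockoffAug X Xt)ᵀ *ᵥ (X *ᵥ β) := by
  have hnull : ∀ j ∈ S, ((knockoffAug X Xt)ᵀ *ᵥ (X *ᵥ β)) (.inl j)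
      = ((knockoffAug X Xt)ᵀ *ᵥ (X *ᵥ β)) (.inr j) := by
    intro j hj
    simp [knockoffAug, transpose_fromCols, fromRows_mulVec, mulVec_mulVec,
      transpose_mul_eq_sub_diagonal_of_mul_eq h2, sub_mulVec, mulVec_diagonal, hS j hj]
  ext u
  rw [knockoffSwap_eq_submatrix, transpose_submatrix]
  exact apply_swapOn hnull u

end knockoff

section gaussian

variable {ι κ : Type*} [Fintype ι] [Fintype κ]

lemma charFun_map_toLp_pi_gaussianReal (v : ℝ≥0) (t : EuclideanSpace ℝ ι) :
    charFun ((Measure.pi fun _ : ι => gaussianReal 0 v).map (toLp 2)) t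
      = cexp (-(v * (ofLp t ⬝ᵥ ofLp t)) / 2) := by
  rw [charFun_pi]
  simp_rw [charFun_gaussianReal, ← Complex.exp_sum]
  congr 1
  simp [dotProduct, Finset.mul_sum, neg_div, Finset.sum_div, sq]

lemma charFun_map_toLp_mulVec_pi_gaussianReal (v : ℝ≥0) (A : Matrix κ ι ℝ)
    (t : EuclideanSpace ℝ κ) :
    charFun (((Measure.pi fun _ : ι => gaussianReal 0 v).map (A *ᵥ ·)).map (toLp 2)) t
      = cexp (-(v * (ofLp t ⬝ᵥ (A * Aᵀ) *ᵥ ofLp t)) / 2) := by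
  have hinner : ∀ x : ι → ℝ,
      ⟪toLp 2 (A *ᵥ x), t⟫ = ⟪toLp 2 x, toLp 2 (Aᵀ *ᵥ ofLp t)⟫ := by
    intro x
    simp only [EuclideanSpace.inner_eq_star_dotProduct, star_trivial]
    rw [dotProduct_mulVec, ← mulVec_transpose, dotProduct_comm]
  rw [Measure.map_map (by fun_prop) (by fun_prop), charFun_apply,
    integral_map (by fun_prop) (by fun_prop)]
  simp only [Function.comp_apply, hinner]
  rw [← integral_map (f := fun y => cexp (⟪y, toLp 2 (Aᵀ *ᵥ ofLp t)⟫ * I)) (by fun_prop)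
      (by fun_prop),
    ← charFun_apply, charFun_map_toLp_pi_gaussianReal, ofLp_toLp, dotProduct_mulVec,
    vecMul_transpose, dotProduct_comm, mulVec_mulVec]

lemma map_mulVec_pi_gaussianReal_eq_of_mul_transpose_eq {A B : Matrix κ ι ℝ}
    (h : A * Aᵀ = B * Bᵀ) (v : ℝ≥0) :
    (Measure.pi fun _ : ι => gaussianReal 0 v).map (A *ᵥ ·)
      = (Measure.pi fun _ : ι => gaussianReal 0 v).map (B *ᵥ ·) := by
  refine (MeasurableEquiv.toLp 2 (κ → ℝ)).map_measurableEquiv_injective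
    (Measure.ext_of_charFun (funext fun t => ?_))
  simp only [MeasurableEquiv.coe_toLp, charFun_map_toLp_mulVec_pi_gaussianReal, h]

lemma map_const_add_mulVec_eq_of_mul_transpose_eq {Ω : Type*} [MeasurableSpace Ω]
    {μ : Measure Ω} {v : ℝ≥0} {z : Ω → ι → ℝ} (hz : Measurable z)
    (hzlaw : μ.map z = Measure.pi fun _ : ι => gaussianReal 0 v) {A B : Matrix κ ι ℝ}
    (h : A * Aᵀ = B * Bᵀ) (c : κ → ℝ) :
    μ.map (fun ω => c + A *ᵥ z ω) = μ.map (fun ω => c + B *ᵥ z ω) := by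
  have hlaw : ∀ M : Matrix κ ι ℝ, μ.map (fun ω => c + M *ᵥ z ω)
      = ((Measure.pi fun _ : ι => gaussianReal 0 v).map (M *ᵥ ·)).map (c + ·) := by
    intro M
    rw [← hzlaw, Measure.map_map (by fun_prop) hz, Measure.map_map (by fun_prop) (by fun_prop)]
    rfl
  rw [hlaw, hlaw, map_mulVec_pi_gaussianReal_eq_of_mul_transpose_eq h]

end gaussian

theorem knockoff_swap_response_exchangeable_general {n p : ℕ}
    {Ω : Type*} [MeasurableSpace Ω] (μ : Measure Ω)
    (X Xt : Matrix (Fin n) (Fin p) ℝ) (s : Fin p → ℝ)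
    (h1 : Xtᵀ * Xt = Xᵀ * X)
    (h2 : Xᵀ * Xt = Xᵀ * X - Matrix.diagonal s)
    (β : Fin p → ℝ) (σ : ℝ)
    (z : Ω → Fin n → ℝ) (hz : Measurable z)
    (hzlaw : Measure.map z μ = Measure.pi fun _ : Fin n => gaussianReal 0 ⟨σ ^ 2, sq_nonneg σ⟩)
    (y : Ω → Fin n → ℝ) (hy : ∀ ω, y ω = X.mulVec β + z ω)
    (S : Finset (Fin p)) (hSnull : ∀ j ∈ S, β j = 0) :
    Measure.map (fun ω => (knockoffSwap X Xt S)ᵀ.mulVec (y ω)) μ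
      = Measure.map (fun ω => (knockoffAug X Xt)ᵀ.mulVec (y ω)) μ := by
  have hgram : (knockoffSwap X Xt S)ᵀ * (knockoffSwap X Xt S)ᵀᵀ
      = (knockoffAug X Xt)ᵀ * (knockoffAug X Xt)ᵀᵀ := by
    simpa only [transpose_transpose] using knockoffSwap_gram (S := S) h1 h2
  simp only [hy, mulVec_add, knockoffSwap_transpose_mulVec_of_null h2 hSnull]
  exact map_const_add_mulVec_eq_of_mul_transpose_eq hz hzlaw hgram _

/-- **Pairwise exchangeability for the response** (Lemma 3): if `X̃` is a knockoff
matrix for `X` (`X̃ᵀX̃ = XᵀX = Σ`, `XᵀX̃ = Σ − diag{s}`) and `y = Xβ + z` with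
`z ~ N(0, σ²Iₙ)`, then for any subset `S` consisting only of null features
(`β_j = 0` for all `j ∈ S`), the random vector `([X X̃]_swap(S))ᵀ y` has the same
distribution as `[X X̃]ᵀ y`. -/
theorem knockoff_swap_response_exchangeable {n p : ℕ}
    {Ω : Type*} [MeasurableSpace Ω] (μ : Measure Ω) [IsProbabilityMeasure μ]
    (X Xt : Matrix (Fin n) (Fin p) ℝ) (s : Fin p → ℝ)
    (h1 : Xtᵀ * Xt = Xᵀ * X)
    (h2 : Xᵀ * Xt = Xᵀ * X - Matrix.diagonal s)
    (β : Fin p → ℝ) (σ : ℝ) (hσ : 0 < σ)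
    (z : Ω → Fin n → ℝ) (hz : Measurable z)
    (hzlaw : Measure.map z μ = Measure.pi fun _ : Fin n => gaussianReal 0 ⟨σ ^ 2, sq_nonneg σ⟩)
    (y : Ω → Fin n → ℝ) (hy : ∀ ω, y ω = X.mulVec β + z ω)
    (S : Finset (Fin p)) (hSnull : ∀ j ∈ S, β j = 0) :
    Measure.map (fun ω => (knockoffSwap X Xt S)ᵀ.mulVec (y ω)) μ
      = Measure.map (fun ω => (knockoffAug X Xt)ᵀ.mulVec (y ω)) μ :=
  knockoff_swap_response_exchangeable_general μ X Xt s h1 h2 β σ z hz hzlaw y hy S hSnull
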